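/- Let n ≥ 1, μ > 0, τ_min > 0, and t_i ≥ τ_min for all i. Let d* be the profile d*_i = t_i μ / (n + Σ_{k=1}^n t_k). If d₀^M ≥ μ/(1 + τ_min) and c_i ≥ n − 1 for all i, then the affine intervention rule f(d) = min{ max{ Σ_{k=1}^n c_k (d_k − d*_k), 0 }, d₀^M } sustains d* without intervention: f(d*) = 0, and for every i and every x ∈ [0, μ], (d*_i)^{t_i} (μ − Σ_{k=1}^n d*_k) ≥ x^{t_i} ( μ − x − Σ_{k≠i} d*_k − f(x, d*_{-i}) ). -/

import Mathlib

/-!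
At `d*` every term `c_k (d*_k - d*_k)` vanishes, so there is no intervention. A unilateral
deviation of user `i` to `x` faces the payoff `x ^ t_i * (B - q x)`, with `q = 1` below `d*_i`
and `q = 1 + c_i` above it (until the cap `d₀^M` is reached, after which the payoff is `≤ 0`).
Such a function increases up to `t_i B / ((t_i + 1) q)` and decreases afterwards; for
`q = 1` this peak lies above `d*_i` because `n ≥ 1`, and for `q = 1 + c_i` it lies below
`d*_i` because `c_i ≥ n - 1`. The cap `d₀^M ≥ μ / (1 + τ_min)` dominates the margin
`μ - Σ d*_k = n μ / (n + Σ t_k)`.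
-/

open Real Set Finset

section RpowMulSub

variable {t B q : ℝ}

theorem hasDerivAt_rpow_mul_sub {z : ℝ} (hz : 0 < z) :
    HasDerivAt (fun x : ℝ => x ^ t * (B - q * x))
      (z ^ (t - 1) * (t * B - (t + 1) * q * z)) z := by
  have hpow : HasDerivAt (fun x : ℝ => x ^ t) (t * z ^ (t - 1)) z :=
    hasDerivAt_rpow_const (Or.inl hz.ne')
  have hlin : HasDerivAt (fun x : ℝ => B - q * x) (-q) z := by
    simpa using ((hasDerivAt_id z).const_mul q).const_sub B
  refine (hpow.mul hlin).congr_deriv ?_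
  rw [show z ^ t = z ^ (t - 1) * z by rw [← rpow_add_one hz.ne']; ring_nf]
  ring

theorem continuous_rpow_mul_sub (ht : 0 ≤ t) : Continuous (fun x : ℝ => x ^ t * (B - q * x)) :=
  (continuous_rpow_const ht).mul (continuous_const.sub (continuous_const.mul continuous_id))

theorem monotoneOn_rpow_mul_sub (ht : 0 ≤ t) (hq : 0 < q) :
    MonotoneOn (fun x : ℝ => x ^ t * (B - q * x)) (Icc 0 (t * B / ((t + 1) * q))) := by
  refine monotoneOn_of_deriv_nonneg (convex_Icc _ _)
    (continuous_rpow_mul_sub ht).continuousOn (fun z hz => ?_) (fun z hz => ?_) <;>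
    rw [interior_Icc] at hz
  · exact (hasDerivAt_rpow_mul_sub hz.1).differentiableAt.differentiableWithinAt
  · rw [(hasDerivAt_rpow_mul_sub hz.1).deriv]
    have hpeak : (t + 1) * q * z ≤ t * B := by
      have := (lt_div_iff₀ (by positivity)).1 hz.2
      linarith
    exact mul_nonneg (rpow_nonneg hz.1.le _) (by linarith)

theorem antitoneOn_rpow_mul_sub (ht : 0 ≤ t) (hB : 0 ≤ B) (hq : 0 < q) :
    AntitoneOn (fun x : ℝ => x ^ t * (B - q * x)) (Ici (t * B / ((t + 1) * q))) := by
  have hpeak0 : 0 ≤ t * B / ((t + 1) * q) := by positivity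
  refine antitoneOn_of_deriv_nonpos (convex_Ici _)
    (continuous_rpow_mul_sub ht).continuousOn (fun z hz => ?_) (fun z hz => ?_) <;>
    rw [interior_Ici, Set.mem_Ioi] at hz
  · exact (hasDerivAt_rpow_mul_sub (hpeak0.trans_lt hz)).differentiableAt.differentiableWithinAt
  · rw [(hasDerivAt_rpow_mul_sub (hpeak0.trans_lt hz)).deriv]
    have hpeak : t * B ≤ (t + 1) * q * z := by
      have := (div_lt_iff₀ (by positivity)).1 hz
      linarith
    exact mul_nonpos_of_nonneg_of_nonpos (rpow_nonneg (hpeak0.trans hz.le) _) (by linarith)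

end RpowMulSub

theorem sum_mul_update_sub {ι R : Type*} [Fintype ι] [DecidableEq ι] [CommRing R]
    (c d : ι → R) (i : ι) (x : R) :
    ∑ k, c k * (Function.update d i x k - d k) = c i * (x - d i) := by
  rw [Finset.sum_eq_single i (fun k _ hk => by simp [hk]) (by simp)]
  simp

/-- `A` is the capacity left to user `i` by the others, `d` its target rate. -/
theorem rpow_mul_sub_capped_affine_le {t d A c M x : ℝ} (ht : 0 < t) (hd : 0 ≤ d) (hc : 0 ≤ c)
    (hlow : (t + 1) * d ≤ t * A) (hhigh : t * (A + c * d) ≤ (t + 1) * (1 + c) * d)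
    (hM : A - d ≤ M) (hx : 0 ≤ x) :
    x ^ t * (A - x - min (max (c * (x - d)) 0) M) ≤ d ^ t * (A - d) := by
  have hmargin : 0 ≤ A - d := by nlinarith
  rcases le_or_gt x d with hxd | hdx
  · have hlow' : d ≤ t * A / ((t + 1) * 1) := by
      rw [le_div_iff₀ (by positivity)]; linarith
    have key := monotoneOn_rpow_mul_sub (B := A) ht.le one_pos
      ⟨hx, hxd.trans hlow'⟩ ⟨hd, hlow'⟩ hxd
    rw [max_eq_right (mul_nonpos_of_nonneg_of_nonpos hc (by linarith)),
      min_eq_left (hmargin.trans hM)]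
    simpa using key
  rcases le_or_gt M (c * (x - d)) with hcap | hcap
  · rw [max_eq_left (mul_nonneg hc (by linarith)), min_eq_right hcap]
    exact (mul_nonpos_of_nonneg_of_nonpos (rpow_nonneg hx _) (by linarith)).trans
      (mul_nonneg (rpow_nonneg hd _) hmargin)
  · have hhigh' : t * (A + c * d) / ((t + 1) * (1 + c)) ≤ d := by
      rw [div_le_iff₀ (by positivity)]; linarith
    have key := antitoneOn_rpow_mul_sub ht.le (by nlinarith [mul_nonneg hc hd])
      (by linarith : 0 < 1 + c) hhigh' (hhigh'.trans hdx.le) hdx.le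
    rw [max_eq_left (mul_nonneg hc (by linarith)), min_eq_left hcap.le]
    rwa [show A - x - c * (x - d) = A + c * d - (1 + c) * x by ring,
      show A - d = A + c * d - (1 + c) * d by ring]

/-- If d₀^M ≥ μ/(1 + τ_min) and c_i ≥ n − 1 for all i, then the affine intervention rule
with target equal to the socially optimal profile d*_i = t_i μ/(n + Σ_k t_k) sustains d*
without intervention. -/
theorem stmt_11 (n : ℕ) (hn : 1 ≤ n) (μ : ℝ) (hμ : 0 < μ)
    (τmin : ℝ) (hτmin : 0 < τmin)
    (t : Fin n → ℝ) (ht : ∀ i, τmin ≤ t i)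
    (dstar : Fin n → ℝ)
    (hdstar : ∀ i, dstar i = t i * μ / ((n : ℝ) + ∑ k, t k))
    (d0M : ℝ) (hd0M : μ / (1 + τmin) ≤ d0M)
    (c : Fin n → ℝ) (hc : ∀ i, (n : ℝ) - 1 ≤ c i)
    (f : (Fin n → ℝ) → ℝ)
    (hf : ∀ d, f d = min (max (∑ k, c k * (d k - dstar k)) 0) d0M) :
    f dstar = 0 ∧
    ∀ i, ∀ x ∈ Set.Icc (0 : ℝ) μ,
      x ^ t i * (μ - x - (∑ k ∈ Finset.univ.erase i, dstar k)
          - f (Function.update dstar i x)) ≤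
        dstar i ^ t i * (μ - ∑ k, dstar k) := by
  have hn' : (1 : ℝ) ≤ n := by exact_mod_cast hn
  have hT : (n : ℝ) * τmin ≤ ∑ k, t k := by
    simpa using Finset.card_nsmul_le_sum univ t τmin (fun i _ => ht i)
  have hS : 0 < (n : ℝ) + ∑ k, t k := by nlinarith
  set u := μ / ((n : ℝ) + ∑ k, t k)
  have hμu : μ = ((n : ℝ) + ∑ k, t k) * u := (mul_div_cancel₀ μ hS.ne').symm
  have hd : ∀ i, dstar i = t i * u := fun i => (hdstar i).trans (mul_div_assoc _ _ _)
  have hsum : ∑ k, dstar k = (∑ k, t k) * u := by simp only [hd, Finset.sum_mul]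
  have hcap : (n : ℝ) * u ≤ d0M := hd0M.trans' <| by
    rw [← mul_div_assoc, div_le_div_iff₀ hS (by linarith)]
    nlinarith [mul_le_mul_of_nonneg_left hT hμ.le]
  have hu : 0 ≤ u := by positivity
  have hd0M0 : 0 ≤ d0M := (mul_nonneg n.cast_nonneg hu).trans hcap
  refine ⟨by simp [hf, hd0M0], fun i x hx => ?_⟩
  have hti : 0 < t i := hτmin.trans_le (ht i)
  have hdi : 0 ≤ dstar i := hd i ▸ mul_nonneg hti.le hu
  have hlow : (t i + 1) * dstar i ≤ t i * ((n + t i) * u) := by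
    rw [hd]; nlinarith [mul_nonneg hti.le hu]
  have hhigh : t i * ((n + t i) * u + c i * dstar i) ≤ (t i + 1) * (1 + c i) * dstar i := by
    rw [hd]; nlinarith [mul_nonneg (mul_nonneg hti.le hu) (by linarith [hc i] : 0 ≤ 1 + c i - n)]
  have hmargin : (n + t i) * u - dstar i ≤ d0M := by rw [hd]; linarith
  have key := rpow_mul_sub_capped_affine_le hti hdi (by linarith [hc i]) hlow hhigh hmargin hx.1
  rw [hf, sum_mul_update_sub, Finset.sum_erase_eq_sub (mem_univ i)]
  convert key using 2 <;> linear_combination hμu - hsum + hd i
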